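/- Quantitative Eneström–Kakeya, outer bound: Let p(X) = a_n X^n + … + a_0 with a_0 ≥ a_1 ≥ … ≥ a_n > 0, and let R = max{a_ν/a_{ν+1} : 0 ≤ ν < n}. Then for every complex z with |z| ≥ R and z ≠ R, one has (|z| - R)/|z - R| ≤ |p(z)|/(a_n |z|^n) ≤ (R + |z|)/|R - z|. -/

import Mathlib

/-!
Multiplying by `R - z` telescopes `p`: `(R - z) p(z) = Q(z) - aₙ z^(n+1)` with
`Q(z) = R a₀ + ∑_{ν<n} (R a_{ν+1} - a_ν) z^(ν+1)`. By the choice of `R` every coefficient of `Q`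
is nonnegative, so `|Q(z)| ≤ Q(|z|)`, and for `|z| ≥ R` the estimate `R a_ν |z|^ν ≤ a_ν |z|^(ν+1)`
telescopes `Q(|z|)` down to at most `R aₙ |z|^n`. Hence `|(R - z) p(z)|` lies within
`R aₙ |z|^n` of `aₙ |z|^(n+1)`.
-/

open Finset

theorem le_of_le_of_forall_lt_succ_le {α : Type*} [Preorder α] {a : ℕ → α} {n : ℕ}
    (h : ∀ ν < n, a (ν + 1) ≤ a ν) {ν : ℕ} (hν : ν ≤ n) : a n ≤ a ν := by
  induction hν using Nat.decreasingInduction with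
  | self => exact le_rfl
  | of_succ k hk ih => exact ih.trans (h k hk)

theorem sub_mul_sum_range_succ_mul_pow {A : Type*} [CommRing A] (a : ℕ → A) (r z : A) (n : ℕ) :
    (r - z) * ∑ ν ∈ range (n + 1), a ν * z ^ ν =
      r * a 0 + ∑ ν ∈ range n, (r * a (ν + 1) - a ν) * z ^ (ν + 1) - a n * z ^ (n + 1) := by
  induction n with
  | zero => simp only [zero_add, range_one, sum_singleton, range_zero, sum_empty]; ring
  | succ n ih => rw [sum_range_succ, mul_add, ih, sum_range_succ]; ring

theorem add_sum_range_sub_mul_pow_le {a : ℕ → ℝ} {r x : ℝ} {n : ℕ} (hr : 0 ≤ r) (hrx : r ≤ x)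
    (ha : ∀ ν ≤ n, 0 ≤ a ν) :
    r * a 0 + ∑ ν ∈ range n, (r * a (ν + 1) - a ν) * x ^ (ν + 1) ≤ r * a n * x ^ n := by
  induction n with
  | zero => simp
  | succ n ih =>
    have hxn : r * a n * x ^ n ≤ a n * x ^ (n + 1) :=
      calc r * a n * x ^ n = a n * x ^ n * r := by ring
        _ ≤ a n * x ^ n * x :=
          mul_le_mul_of_nonneg_left hrx (mul_nonneg (ha n n.le_succ) (pow_nonneg (hr.trans hrx) n))
        _ = a n * x ^ (n + 1) := by ring
    rw [sum_range_succ]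
    linarith [ih fun ν hν => ha ν (hν.trans n.le_succ)]

theorem norm_sub_mul_sum_range_succ_add_le {𝕜 : Type*} [RCLike 𝕜] {a : ℕ → ℝ} {r : ℝ} {n : ℕ}
    (hr : 0 ≤ r) (ha : ∀ ν ≤ n, 0 ≤ a ν) (hra : ∀ ν < n, a ν ≤ r * a (ν + 1))
    {z : 𝕜} (hrz : r ≤ ‖z‖) :
    ‖((r : 𝕜) - z) * ∑ ν ∈ range (n + 1), (a ν : 𝕜) * z ^ ν + (a n : 𝕜) * z ^ (n + 1)‖ ≤
      r * a n * ‖z‖ ^ n := by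
  rw [sub_mul_sum_range_succ_mul_pow, sub_add_cancel]
  refine (norm_add_le _ _).trans <| le_trans (add_le_add ?_ <| (norm_sum_le _ _).trans
    (sum_le_sum fun ν hν => ?_)) (add_sum_range_sub_mul_pow_le hr hrz ha)
  · rw [norm_mul, RCLike.norm_ofReal, RCLike.norm_ofReal, abs_of_nonneg hr,
      abs_of_nonneg (ha 0 n.zero_le)]
  · have hν := hra ν (mem_range.mp hν)
    rw [← RCLike.ofReal_mul, ← RCLike.ofReal_sub, norm_mul, norm_pow, RCLike.norm_ofReal,
      abs_of_nonneg (sub_nonneg.mpr hν)]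

theorem norm_sub_mul_norm_sum_range_succ_mem_Icc {𝕜 : Type*} [RCLike 𝕜] {a : ℕ → ℝ} {r : ℝ}
    {n : ℕ} (hr : 0 ≤ r) (ha : ∀ ν ≤ n, 0 ≤ a ν) (hra : ∀ ν < n, a ν ≤ r * a (ν + 1))
    {z : 𝕜} (hrz : r ≤ ‖z‖) :
    ‖(r : 𝕜) - z‖ * ‖∑ ν ∈ range (n + 1), (a ν : 𝕜) * z ^ ν‖ ∈
      Set.Icc ((‖z‖ - r) * (a n * ‖z‖ ^ n)) ((r + ‖z‖) * (a n * ‖z‖ ^ n)) := by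
  have hlead : ‖(a n : 𝕜) * z ^ (n + 1)‖ = ‖z‖ * (a n * ‖z‖ ^ n) := by
    rw [norm_mul, norm_pow, RCLike.norm_ofReal, abs_of_nonneg (ha n le_rfl), pow_succ]
    ring
  have hclose := abs_norm_sub_norm_le (((r : 𝕜) - z) * ∑ ν ∈ range (n + 1), (a ν : 𝕜) * z ^ ν)
    (-((a n : 𝕜) * z ^ (n + 1)))
  rw [sub_neg_eq_add] at hclose
  replace hclose := hclose.trans (norm_sub_mul_sum_range_succ_add_le hr ha hra hrz)
  rw [norm_neg, hlead, norm_mul, abs_le] at hclose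
  constructor <;> linarith [hclose.1, hclose.2]

theorem stmt_5 (n : ℕ) (hn : 1 ≤ n) (a : ℕ → ℝ)
    (hpos : 0 < a n) (hdec : ∀ ν < n, a (ν + 1) ≤ a ν)
    (R : ℝ)
    (hR : R = (Finset.range n).sup' (Finset.nonempty_range_iff.mpr (by omega))
      (fun ν => a ν / a (ν + 1)))
    (z : ℂ) (hzR : R ≤ ‖z‖) (hne : z ≠ (R : ℂ)) :
    (‖z‖ - R) / ‖z - (R : ℂ)‖ ≤
      ‖Polynomial.eval z
        (∑ ν ∈ Finset.range (n + 1), Polynomial.C ((a ν : ℂ)) * Polynomial.X ^ ν)‖ /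
        (a n * ‖z‖ ^ n) ∧
    ‖Polynomial.eval z
        (∑ ν ∈ Finset.range (n + 1), Polynomial.C ((a ν : ℂ)) * Polynomial.X ^ ν)‖ /
        (a n * ‖z‖ ^ n) ≤
      (R + ‖z‖) / ‖(R : ℂ) - z‖ := by
  have ha : ∀ ν ≤ n, 0 < a ν := fun ν hν => hpos.trans_le (le_of_le_of_forall_lt_succ_le hdec hν)
  have hratio : ∀ ν < n, a ν / a (ν + 1) ≤ R := fun ν hν =>
    hR ▸ le_sup' (fun ν => a ν / a (ν + 1)) (mem_range.mpr hν)
  have hra : ∀ ν < n, a ν ≤ R * a (ν + 1) := fun ν hν => (div_le_iff₀ (ha _ hν)).mp (hratio ν hν)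
  have hR0 : 0 ≤ R := (div_nonneg (ha 0 (by omega)).le (ha 1 hn).le).trans (hratio 0 hn)
  have hz : 0 < ‖z‖ := norm_pos_iff.mpr fun hz0 => hne <| by
    rw [hz0, norm_zero] at hzR
    rw [hz0, le_antisymm hzR hR0, Complex.ofReal_zero]
  have hzR0 : 0 < ‖(R : ℂ) - z‖ := norm_pos_iff.mpr (sub_ne_zero.mpr (Ne.symm hne))
  have hden : 0 < a n * ‖z‖ ^ n := by positivity
  obtain ⟨hlow, hup⟩ :=
    norm_sub_mul_norm_sum_range_succ_mem_Icc hR0 (fun ν hν => (ha ν hν).le) hra hzR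
  simp only [Polynomial.eval_finsetSum, Polynomial.eval_mul, Polynomial.eval_C,
    Polynomial.eval_pow, Polynomial.eval_X]
  rw [norm_sub_rev z, div_le_div_iff₀ hzR0 hden, div_le_div_iff₀ hden hzR0]
  exact ⟨hlow.trans_eq (mul_comm _ _), (mul_comm _ _).trans_le hup⟩
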